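/- arXiv:1607.08311 — 4 statements merged into one kernel-verified Lean document; each statement's English description precedes it below -/
import Mathlib

section
/- The map g : (ℤ/2^nℤ)^m → (ℤ/2^nℤ)^m defined componentwise by g(A)_i = A_i · (2·A_i + 4·A_{(i+1 mod m)} + 1) is a bijection, for any n ≥ 1 and m ≥ 1. -/
theorem vsc21_round_bijective (n m : ℕ) (hn : 1 ≤ n) (hm : 1 ≤ m) :
    Function.Bijective (fun A : Fin m → ZMod (2^n) => fun i : Fin m =>
      A i * (2 * A i + 4 * A ⟨(i.val + 1) % m, Nat.mod_lt _ hm⟩ + 1)) := by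
  haveI : NeZero (2^n) := ⟨by positivity⟩
  rw [← Finite.injective_iff_bijective]
  intro A B hAB
  have key : ∀ k : ℕ, ∀ i : Fin m, ∃ c : ZMod (2^n), A i - B i = 2^k * c := by
    intro k
    induction k with
    | zero => exact fun i => ⟨A i - B i, by ring⟩
    | succ k ih =>
      intro i
      set j : Fin m := ⟨(i.val + 1) % m, Nat.mod_lt _ hm⟩ with hj
      obtain ⟨c, hc⟩ := ih i
      obtain ⟨c', hc'⟩ := ih j
      have heq : A i * (2 * A i + 4 * A j + 1) = B i * (2 * B i + 4 * B j + 1) :=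
        congrFun hAB i
      exact ⟨-((A i + B i) * c + 2 * (A i * c' + B j * c)), by
        linear_combination heq - (2 * (A i + B i) + 4 * B j) * hc - 4 * (A i) * hc'⟩
  funext i
  obtain ⟨c, hc⟩ := key n i
  have h2 : (2 : ZMod (2^n))^n = 0 := by
    have := ZMod.natCast_self (2^n)
    push_cast at this
    exact this
  rw [h2, zero_mul] at hc
  exact sub_eq_zero.mp hc
end

section
/- For any odd c, the polynomial map f(x) = x·(2x + c) is a bijection on ℤ/2^nℤ for every n ≥ 1. -/
/-!
`x * (a * x + c) - y * (a * y + c) = (x - y) * (c + a * (x + y))`, and the second factor is a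
unit whenever `a` is nilpotent and `c` is a unit. In `ZMod (2 ^ n)` the element `2` is nilpotent
and an odd residue is a unit, so the map is injective, hence bijective on the finite ring.
-/

theorem IsNilpotent.injective_mul_mul_add_of_isUnit {R : Type*} [CommRing R] {a c : R}
    (ha : IsNilpotent a) (hc : IsUnit c) : Function.Injective fun x : R => x * (a * x + c) := by
  intro x y hxy
  have hfactor : (x - y) * (c + a * (x + y)) = 0 := by linear_combination hxy
  have hunit : IsUnit (c + a * (x + y)) :=
    ((Commute.all _ _).isNilpotent_mul_right ha).isUnit_add_left_of_commute hc (Commute.all _ _)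
  exact sub_eq_zero.mp (hunit.mul_left_eq_zero.mp hfactor)

theorem ZMod.isNilpotent_two_of_two_pow (n : ℕ) : IsNilpotent (2 : ZMod (2 ^ n)) :=
  ⟨n, by exact_mod_cast ZMod.natCast_self (2 ^ n)⟩

theorem ZMod.isUnit_of_odd_val {n : ℕ} {c : ZMod (2 ^ n)} (hc : Odd c.val) : IsUnit c := by
  rw [← ZMod.natCast_zmod_val c, ZMod.isUnit_iff_coprime]
  exact hc.coprime_two_right.pow_right n

theorem perm_poly_bijective_of_odd_general (n : ℕ)
    (c : ZMod (2^n)) (hc : Odd c.val) :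
    Function.Bijective (fun x : ZMod (2^n) => x * (2 * x + c)) :=
  Finite.injective_iff_bijective.mp <|
    (ZMod.isNilpotent_two_of_two_pow n).injective_mul_mul_add_of_isUnit (ZMod.isUnit_of_odd_val hc)

theorem perm_poly_bijective_of_odd (n : ℕ) (hn : 1 ≤ n)
    (c : ZMod (2^n)) (hc : Odd c.val) :
    Function.Bijective (fun x : ZMod (2^n) => x * (2 * x + c)) :=
  perm_poly_bijective_of_odd_general n c hc
end

section
/- Injectivity step of Theorem 2: Let A, Ã ∈ (ℤ/2^nℤ)^m be distinct, and for each i write Ã_i - A_i = ε_i·2^{s_i} in ℤ/2^nℤ with ε_i odd and 0 ≤ s_i ≤ n (s_i = n meaning Ã_i = A_i). Let k achieve the minimum of the s_i, so s_k < n. Then with g(A)_i = A_i(2A_i + 4A_{i+1} + 1), the difference g(Ã)_k - g(A)_k has 2-adic valuation exactly s_k; in particular g(Ã)_k ≠ g(A)_k. -/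
lemma odd_val_add_two_mul {n : ℕ} (hn : 1 ≤ n) (x y : ZMod (2^n)) (hx : Odd x.val) :
    Odd (x + 2 * y).val := by
  haveI : NeZero (2^n) := ⟨by positivity⟩
  have hdvd : (2 : ℕ) ∣ 2^n := dvd_pow_self 2 (by omega)
  have key : ∀ z : ZMod (2^n), Odd z.val ↔ (ZMod.castHom hdvd (ZMod 2) z) ≠ 0 := by
    intro z
    rw [ZMod.castHom_apply, ← ZMod.natCast_val, Ne, ZMod.natCast_eq_zero_iff,
      Nat.odd_iff, Nat.dvd_iff_mod_eq_zero]
    omega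
  rw [key] at hx ⊢
  rw [map_add, map_mul, map_ofNat]
  have : (2 : ZMod 2) = 0 := by decide
  rw [this]
  simpa using hx

theorem vsc21_injectivity_step (n m : ℕ) (hn : 1 ≤ n) (hm : 1 ≤ m)
    (A Atil : Fin m → ZMod (2^n)) (hne : A ≠ Atil)
    (s : Fin m → ℕ) (ε : Fin m → ZMod (2^n))
    (hsn : ∀ i, s i ≤ n) (hε : ∀ i, Odd (ε i).val)
    (hd : ∀ i, Atil i - A i = ε i * 2 ^ (s i))
    (k : Fin m) (hk : ∀ i, s k ≤ s i) (hkn : s k < n) :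
    (∃ v : ZMod (2^n), Odd v.val ∧
      (Atil k * (2 * Atil k + 4 * Atil ⟨(k.val + 1) % m, Nat.mod_lt _ hm⟩ + 1)
        - A k * (2 * A k + 4 * A ⟨(k.val + 1) % m, Nat.mod_lt _ hm⟩ + 1)) = v * 2 ^ (s k))
    ∧ Atil k * (2 * Atil k + 4 * Atil ⟨(k.val + 1) % m, Nat.mod_lt _ hm⟩ + 1)
        ≠ A k * (2 * A k + 4 * A ⟨(k.val + 1) % m, Nat.mod_lt _ hm⟩ + 1) := by
  haveI : NeZero (2^n) := ⟨by positivity⟩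
  set k' : Fin m := ⟨(k.val + 1) % m, Nat.mod_lt _ hm⟩ with hk'
  have hAk : Atil k = A k + ε k * 2 ^ (s k) := by
    have := hd k; linear_combination this
  have hsplit : s k' = s k + (s k' - s k) := by have := hk k'; omega
  have hAk' : Atil k' = A k' + ε k' * 2 ^ (s k) * 2 ^ (s k' - s k) := by
    have h := hd k'
    rw [hsplit, pow_add] at h
    linear_combination h
  set v : ZMod (2^n) := ε k + 2 * (ε k * (2 * A k + 2 * A k' + ε k * 2 ^ (s k))
      + 2 * ε k' * 2 ^ (s k' - s k) * (A k + ε k * 2 ^ (s k))) with hv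
  have hDv : Atil k * (2 * Atil k + 4 * Atil k' + 1)
      - A k * (2 * A k + 4 * A k' + 1) = v * 2 ^ (s k) := by
    rw [hAk, hAk', hv]; ring
  have hvodd : Odd v.val := odd_val_add_two_mul hn _ _ (hε k)
  refine ⟨⟨v, hvodd, hDv⟩, ?_⟩
  intro heq
  rw [heq, sub_self] at hDv
  have hvu : IsUnit v := by
    have hvv : ((v.val : ℕ) : ZMod (2^n)) = v := by rw [ZMod.natCast_val, ZMod.cast_id]
    rw [← hvv, ZMod.isUnit_iff_coprime]
    exact Nat.Coprime.pow_right _ (Nat.coprime_two_right.mpr hvodd)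
  have h2 : (2 : ZMod (2^n)) ^ (s k) = 0 := by
    have := hDv.symm
    rwa [hvu.mul_right_eq_zero] at this
  have : ((2 ^ (s k) : ℕ) : ZMod (2^n)) = 0 := by push_cast; exact h2
  rw [ZMod.natCast_eq_zero_iff] at this
  have := (Nat.pow_dvd_pow_iff_le_right one_lt_two).mp this
  omega
end

section
/- Valuation lemma used in the proof of Theorem 2: let n ≥ 1, and let x, y, δ, δ' ∈ ℤ with δ = (2p-1)·2^s, δ' = (2q-1)·2^t for positive integers p, q and 0 ≤ s ≤ t, s < n. Then (x + δ)(2(x+δ) + 4(y+δ') + 1) - x(2x + 4y + 1) ≡ (2p-1)·2^s + r·2^{s+1} + r'·2^{t+2} (mod 2^n) for some integers r, r', and hence this difference has 2-adic valuation exactly s and is nonzero mod 2^n. -/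
theorem vsc21_valuation_lemma (n : ℕ) (hn : 1 ≤ n) (x y : ℤ)
    (p q : ℤ) (hp : 1 ≤ p) (hq : 1 ≤ q) (s t : ℕ) (hst : s ≤ t) (hsn : s < n) :
    (∃ r r' : ℤ,
      ((x + (2 * p - 1) * 2 ^ s) *
          (2 * (x + (2 * p - 1) * 2 ^ s) + 4 * (y + (2 * q - 1) * 2 ^ t) + 1)
        - x * (2 * x + 4 * y + 1))
        ≡ (2 * p - 1) * 2 ^ s + r * 2 ^ (s + 1) + r' * 2 ^ (t + 2) [ZMOD (2 ^ n)]) ∧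
    (∃ u : ℤ, Odd u ∧
      ((x + (2 * p - 1) * 2 ^ s) *
          (2 * (x + (2 * p - 1) * 2 ^ s) + 4 * (y + (2 * q - 1) * 2 ^ t) + 1)
        - x * (2 * x + 4 * y + 1)) ≡ u * 2 ^ s [ZMOD (2 ^ n)]) ∧
    ¬ ((x + (2 * p - 1) * 2 ^ s) *
          (2 * (x + (2 * p - 1) * 2 ^ s) + 4 * (y + (2 * q - 1) * 2 ^ t) + 1)
        - x * (2 * x + 4 * y + 1)) ≡ 0 [ZMOD (2 ^ n)] := by
  obtain ⟨k, rfl⟩ := Nat.exists_eq_add_of_le hst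
  set D : ℤ := ((x + (2 * p - 1) * 2 ^ s) *
          (2 * (x + (2 * p - 1) * 2 ^ s) + 4 * (y + (2 * q - 1) * 2 ^ (s + k)) + 1)
        - x * (2 * x + 4 * y + 1)) with hDdef
  set r : ℤ := (2 * p - 1) * (2 * x + 2 * y + (2 * p - 1) * 2 ^ s + 2 * ((2 * q - 1) * 2 ^ (s + k))) with hr
  set r' : ℤ := (2 * q - 1) * x with hr'
  set u : ℤ := (2 * p - 1) + 2 * r + 2 ^ (k + 2) * r' with hu
  have hD : D = (2 * p - 1) * 2 ^ s + r * 2 ^ (s + 1) + r' * 2 ^ (s + k + 2) := by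
    simp only [hDdef, hr, hr']; ring
  have hDu : D = u * 2 ^ s := by
    simp only [hDdef, hu, hr, hr']; ring
  have hodd : Odd u := by
    refine ⟨p - 1 + r + 2 ^ (k + 1) * r', ?_⟩
    simp only [hu]; ring
  refine ⟨⟨r, r', by rw [hD]⟩, ⟨u, hodd, by rw [hDu]⟩, ?_⟩
  intro h
  have hdvd : (2 : ℤ) ^ n ∣ D := (Int.modEq_zero_iff_dvd).mp h
  have h2 : (2 : ℤ) ^ (s + 1) ∣ u * 2 ^ s := by
    rw [← hDu]; exact dvd_trans (pow_dvd_pow 2 hsn) hdvd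
  rw [pow_succ, mul_comm u] at h2
  have : (2 : ℤ) ∣ u := (mul_dvd_mul_iff_left (a := (2:ℤ)^s) (by positivity)).mp h2
  obtain ⟨m, hm⟩ := hodd; omega
end
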